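/- For every odd natural number n, the sum a(0)+a(1)+⋯+a(n) of the first n+1 odious numbers equals n² + (3n+1)/2, i.e., 2·S(n) = 2n² + 3n + 1. -/

import Mathlib

/-- Sum of base-`d` digits of `n`. -/
def sdig (d n : ℕ) : ℕ := (Nat.digits d n).sum

/-- `t_d(n)`: base-`d` digit sum of `n`, reduced mod `d`. -/
def td (d n : ℕ) : ℕ := sdig d n % d

/-- `a_{j,d}(n)`: n-th natural (0-indexed, increasing) with base-`d` digit sum ≡ j mod d. -/
noncomputable def agen (d j n : ℕ) : ℕ := Nat.nth (fun k => sdig d k % d = j) n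

/-- n-th odious number (binary digit sum odd), 0-indexed increasing. -/
noncomputable def odious (n : ℕ) : ℕ := Nat.nth (fun k => (Nat.digits 2 k).sum % 2 = 1) n

/-- n-th evil number (binary digit sum even), 0-indexed increasing. -/
noncomputable def evil (n : ℕ) : ℕ := Nat.nth (fun k => (Nat.digits 2 k).sum % 2 = 0) n

/-- Thue–Morse sequence: parity of the binary digit sum. -/
def tm (n : ℕ) : ℕ := (Nat.digits 2 n).sum % 2

/-!
Appending a binary digit `0` or `1` to `k` keeps or flips the parity of the digit sum, so
exactly one of `2k` and `2k + 1` is odious. Hence exactly `k` odious numbers lie below `2k`, and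
the `k`-th odious number is `2k + 1 - tm k`,
and summing over `k ≤ 2m + 1` gives `(2m + 2)² - (m + 1)`.
-/

lemma digits_two_sum_two_mul (n : ℕ) : (Nat.digits 2 (2 * n)).sum = (Nat.digits 2 n).sum := by
  rcases Nat.eq_zero_or_pos n with rfl | hn
  · simp
  · simpa using congrArg List.sum (Nat.digits_add 2 one_lt_two 0 n two_pos (.inr hn.ne'))

lemma digits_two_sum_two_mul_add_one (n : ℕ) :
    (Nat.digits 2 (2 * n + 1)).sum = (Nat.digits 2 n).sum + 1 := by
  rw [add_comm, Nat.digits_add 2 one_lt_two 1 n one_lt_two (.inl one_ne_zero), List.sum_cons,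
    add_comm]

lemma tm_le_one (n : ℕ) : tm n ≤ 1 := Nat.le_of_lt_succ (Nat.mod_lt _ two_pos)

lemma tm_two_mul (n : ℕ) : tm (2 * n) = tm n := by
  rw [tm, digits_two_sum_two_mul, tm]

lemma tm_two_mul_add_tm_two_mul_add_one (n : ℕ) : tm (2 * n) + tm (2 * n + 1) = 1 := by
  rw [tm, tm, digits_two_sum_two_mul, digits_two_sum_two_mul_add_one]
  omega

lemma count_tm_eq_one_two_mul (n : ℕ) : Nat.count (tm · = 1) (2 * n) = n := by
  induction n with
  | zero => simp
  | succ m ih =>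
    have hpair := tm_two_mul_add_tm_two_mul_add_one m
    rw [Nat.mul_succ, Nat.count_succ, Nat.count_succ, ih]
    split_ifs <;> omega

lemma odious_add_tm (n : ℕ) : odious n + tm n = 2 * n + 1 := by
  have hpair := tm_two_mul_add_tm_two_mul_add_one n
  have hcount := count_tm_eq_one_two_mul n
  have hnth (k : ℕ) (hk : tm k = 1) : Nat.nth (tm · = 1) (Nat.count (tm · = 1) k) = k :=
    Nat.nth_count hk
  change Nat.nth (tm · = 1) n + tm n = 2 * n + 1
  rw [← tm_two_mul n]
  rcases Nat.le_one_iff_eq_zero_or_eq_one.mp (tm_le_one (2 * n)) with h | h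
  · have hodd := hnth (2 * n + 1) (by omega)
    rw [Nat.count_succ, hcount, if_neg (by omega), add_zero] at hodd
    rw [hodd, h]
  · have heven := hnth (2 * n) h
    rw [hcount] at heven
    rw [heven, h]

lemma sum_range_two_mul_tm (m : ℕ) : ∑ k ∈ Finset.range (2 * m), tm k = m := by
  induction m with
  | zero => simp
  | succ m ih =>
    rw [Nat.mul_succ, Finset.sum_range_succ, Finset.sum_range_succ, add_assoc, ih,
      tm_two_mul_add_tm_two_mul_add_one]

lemma sum_range_two_mul_add_one (N : ℕ) : ∑ k ∈ Finset.range N, (2 * k + 1) = N ^ 2 := by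
  induction N with
  | zero => simp
  | succ N ih => rw [Finset.sum_range_succ, ih]; ring

theorem stmt8 (n : ℕ) (hn : Odd n) :
    2 * ∑ k ∈ Finset.range (n + 1), odious k = 2 * n ^ 2 + 3 * n + 1 := by
  obtain ⟨m, rfl⟩ := hn
  have hsum : ∑ k ∈ Finset.range (2 * (m + 1)), odious k + (m + 1) = (2 * (m + 1)) ^ 2 :=
    calc _ = ∑ k ∈ Finset.range (2 * (m + 1)), (odious k + tm k) := by
          rw [Finset.sum_add_distrib, sum_range_two_mul_tm]
      _ = ∑ k ∈ Finset.range (2 * (m + 1)), (2 * k + 1) :=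
          Finset.sum_congr rfl fun k _ => odious_add_tm k
      _ = _ := sum_range_two_mul_add_one _
  rw [show 2 * m + 1 + 1 = 2 * (m + 1) by ring]
  linarith
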